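/- In every stateful proposition algebra in which a • s = s for all atoms a and states s, it holds that t • s = s for every closed conditional expression t and state s, and consequently the axioms (CPstat): (x◁y▷z)◁u▷v = (x◁u▷v)◁y▷(z◁u▷v) and (CPcontr): (x◁y▷z)◁y▷u = x◁y▷u hold for all closed terms. -/

import Mathlib

/-! The atoms being static, a structural induction shows that every closed term `t` is static
(`t • s = s`): the two branches of `t • s` reduce to `s`, and `s ◁ b ▷ s = s` because the
reply `b` is `T` or `F`. For static terms the reply to a conditional is computed in the unchanged
state, so replies to both sides of (CPstat) and (CPcontr) become conditional expressions over the
two-valued replies of the components, where these axioms follow from (CP); extensionality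
(`spa8`) lifts the equality of replies back to the terms. -/

inductive CE (A : Type) : Type
  | tt : CE A
  | ff : CE A
  | atom : A → CE A
  | cond : CE A → CE A → CE A → CE A

structure SPA (A : Type) where
  C : Type
  S : Type
  tt : C
  ff : C
  atom : A → C
  cond : C → C → C → C
  scond : S → C → S → S
  rep : C → S → C
  app : C → S → S
  cp1 : ∀ x y, cond x tt y = x
  cp2 : ∀ x y, cond x ff y = y
  cp3 : ∀ x, cond tt x ff = x
  cp4 : ∀ x y z u v, cond x (cond y z u) v = cond (cond x y v) z (cond x u v)
  ts1 : ∀ s s', scond s tt s' = s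
  ts2 : ∀ s s', scond s ff s' = s'
  spa1 : ∀ s, rep tt s = tt
  spa2 : ∀ s, rep ff s = ff
  spa3 : ∀ x y z s, rep (cond x y z) s = cond (rep x (app y s)) (rep y s) (rep z (app y s))
  spa4 : ∀ s, app tt s = s
  spa5 : ∀ s, app ff s = s
  spa6 : ∀ x y z s, app (cond x y z) s = scond (app x (app y s)) (rep y s) (app z (app y s))
  spa7 : ∀ x s, rep x s = tt ∨ rep x s = ff
  spa8 : ∀ x y, (∀ s, rep x s = rep y s ∧ app x s = app y s) → x = y

/-- Interpretation of closed conditional expressions in an SPA. -/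
def interp {A : Type} (P : SPA A) : CE A → P.C
  | .tt => P.tt
  | .ff => P.ff
  | .atom a => P.atom a
  | .cond x y z => P.cond (interp P x) (interp P y) (interp P z)

namespace SPA

variable {A : Type} (P : SPA A)

theorem cond_cond_comm_of_two_valued {b : P.C} (hb : b = P.tt ∨ b = P.ff) (x z c v : P.C) :
    P.cond (P.cond x b z) c v = P.cond (P.cond x c v) b (P.cond z c v) := by
  rcases hb with rfl | rfl <;> simp only [P.cp1, P.cp2]

theorem cond_cond_self_of_two_valued {b : P.C} (hb : b = P.tt ∨ b = P.ff) (x z u : P.C) :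
    P.cond (P.cond x b z) b u = P.cond x b u := by
  rcases hb with rfl | rfl <;> simp only [P.cp1, P.cp2]

theorem scond_self_rep (s : P.S) (x : P.C) (t : P.S) : P.scond s (P.rep x t) s = s := by
  rcases P.spa7 x t with h | h <;> rw [h]
  exacts [P.ts1 s s, P.ts2 s s]

def IsStatic (x : P.C) : Prop :=
  ∀ s, P.app x s = s

theorem isStatic_tt : P.IsStatic P.tt := P.spa4

theorem isStatic_ff : P.IsStatic P.ff := P.spa5

variable {P}

theorem IsStatic.cond {x y z : P.C} (hx : P.IsStatic x) (hy : P.IsStatic y)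
    (hz : P.IsStatic z) : P.IsStatic (P.cond x y z) := fun s => by
  rw [P.spa6, hy, hx, hz, scond_self_rep]

theorem rep_cond_of_isStatic {y : P.C} (hy : P.IsStatic y) (x z : P.C) (s : P.S) :
    P.rep (P.cond x y z) s = P.cond (P.rep x s) (P.rep y s) (P.rep z s) := by
  rw [P.spa3, hy]

theorem IsStatic.ext {x y : P.C} (hx : P.IsStatic x) (hy : P.IsStatic y)
    (h : ∀ s, P.rep x s = P.rep y s) : x = y :=
  P.spa8 x y fun s => ⟨h s, (hx s).trans (hy s).symm⟩

theorem cond_cond_comm_of_isStatic {x y z u v : P.C} (hx : P.IsStatic x) (hy : P.IsStatic y)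
    (hz : P.IsStatic z) (hu : P.IsStatic u) (hv : P.IsStatic v) :
    P.cond (P.cond x y z) u v = P.cond (P.cond x u v) y (P.cond z u v) := by
  refine IsStatic.ext ((hx.cond hy hz).cond hu hv) ((hx.cond hu hv).cond hy (hz.cond hu hv))
    fun s => ?_
  simp only [rep_cond_of_isStatic hu, rep_cond_of_isStatic hy]
  exact P.cond_cond_comm_of_two_valued (P.spa7 y s) _ _ _ _

theorem cond_cond_self_of_isStatic {x y z u : P.C} (hx : P.IsStatic x) (hy : P.IsStatic y)
    (hz : P.IsStatic z) (hu : P.IsStatic u) :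
    P.cond (P.cond x y z) y u = P.cond x y u := by
  refine IsStatic.ext ((hx.cond hy hz).cond hy hu) (hx.cond hy hu) fun s => ?_
  simp only [rep_cond_of_isStatic hy]
  exact P.cond_cond_self_of_two_valued (P.spa7 y s) _ _ _

end SPA

theorem isStatic_interp {A : Type} {P : SPA A} (hA : ∀ a, P.IsStatic (P.atom a)) :
    ∀ t : CE A, P.IsStatic (interp P t)
  | .tt => P.isStatic_tt
  | .ff => P.isStatic_ff
  | .atom a => hA a
  | .cond x y z => (isStatic_interp hA x).cond (isStatic_interp hA y) (isStatic_interp hA z)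

/-- In an SPA where a • s = s for all atoms a, every closed conditional expression
satisfies t • s = s, and the axioms (CPstat) and (CPcontr) hold for all closed terms. -/
theorem spa_static (A : Type) (P : SPA A)
    (hA : ∀ (a : A) (s : P.S), P.app (P.atom a) s = s) :
    (∀ (t : CE A) (s : P.S), P.app (interp P t) s = s) ∧
    (∀ x y z u v : CE A,
      interp P (.cond (.cond x y z) u v) =
        interp P (.cond (.cond x u v) y (.cond z u v))) ∧
    (∀ x y z u : CE A,
      interp P (.cond (.cond x y z) y u) = interp P (.cond x y u)) := by
  have hstatic := isStatic_interp hA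
  exact ⟨hstatic,
    fun x y z u v => SPA.cond_cond_comm_of_isStatic (hstatic x) (hstatic y) (hstatic z)
      (hstatic u) (hstatic v),
    fun x y z u => SPA.cond_cond_self_of_isStatic (hstatic x) (hstatic y) (hstatic z)
      (hstatic u)⟩
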